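/- arXiv:1810.08264 — 4 statements merged into one kernel-verified Lean document; each statement's English description precedes it below -/
import Mathlib

section
/- Suppose there exist t > 0 and B̄_n > 0 such that Σ_{k=1}^n E[ ξ_k² e^{t|ξ_k|} ] ≤ B̄_n². Then for every x with 0 < x < B̄_n, P( Σ_{k=1}^n ξ_k > C_t B̄_n x ) ≤ exp(−x²), where C_t = t + t^{−1}. -/
open MeasureTheory ProbabilityTheory Real

/-!
Chernoff's method. The elementary bound `exp y ≤ 1 + y + y ^ 2 / 2 * exp |y|` gives, for
`0 ≤ s ≤ t` and a centred `ξ`, `E[exp (s ξ)] ≤ 1 + s ^ 2 / 2 * E[ξ ^ 2 * exp (t |ξ|)]`, so by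
independence the moment generating function of the sum is at most `exp (s ^ 2 B ^ 2 / 2)`.
Markov's inequality at `s = t x / B`, which satisfies `s ≤ t` because `x < B`, leaves the exponent
`-x ^ 2 - (t x) ^ 2 / 2`.
-/

namespace Real

lemma exp_le_one_add_add_sq_half_of_nonpos {y : ℝ} (hy : y ≤ 0) :
    exp y ≤ 1 + y + y ^ 2 / 2 := by
  have hanti : Antitone fun w : ℝ => 1 + w + w ^ 2 / 2 - exp w := by
    refine antitone_of_hasDerivAt_nonpos (f' := fun w => 1 + w - exp w) (fun w => ?_)
      fun w => by simp only [Pi.zero_apply]; linarith [add_one_le_exp w]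
    exact ((((hasDerivAt_id' w).const_add 1).add ((hasDerivAt_pow 2 w).div_const 2)).sub
      (hasDerivAt_exp w)).congr_deriv (by norm_num)
  simpa using hanti hy

lemma exp_le_one_add_add_sq_half_mul_exp_of_nonneg {y : ℝ} (hy : 0 ≤ y) :
    exp y ≤ 1 + y + y ^ 2 / 2 * exp y := by
  have hmono : Monotone fun w : ℝ => 1 + w + w ^ 2 / 2 * exp w - exp w := by
    refine monotone_of_hasDerivAt_nonneg
      (f' := fun w => 1 - (1 - w) * exp w + w ^ 2 / 2 * exp w) (fun w => ?_) fun w => ?_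
    · exact ((((hasDerivAt_id' w).const_add 1).add
        (((hasDerivAt_pow 2 w).div_const 2).mul (hasDerivAt_exp w))).sub
          (hasDerivAt_exp w)).congr_deriv (by norm_num; ring)
    · have : (1 - w) * exp w ≤ 1 := by
        simpa [← exp_add, sub_eq_neg_add] using
          mul_le_mul_of_nonneg_right (add_one_le_exp (-w)) (exp_pos w).le
      dsimp; nlinarith [exp_pos w, sq_nonneg w]
  simpa using hmono hy

lemma exp_le_one_add_add_sq_half_mul_exp_abs (y : ℝ) :
    exp y ≤ 1 + y + y ^ 2 / 2 * exp |y| := by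
  rcases le_total y 0 with hy | hy
  · nlinarith [exp_le_one_add_add_sq_half_of_nonpos hy, one_le_exp (abs_nonneg y), sq_nonneg y]
  · simpa [abs_of_nonneg hy] using exp_le_one_add_add_sq_half_mul_exp_of_nonneg hy

end Real

lemma exp_mul_le_one_add_add_sq_mul_exp_mul_abs {s t : ℝ} (hs : 0 ≤ s) (hst : s ≤ t) (u : ℝ) :
    exp (s * u) ≤ 1 + s * u + s ^ 2 / 2 * (u ^ 2 * exp (t * |u|)) := by
  have hexp : exp |s * u| ≤ exp (t * |u|) := by
    rw [exp_le_exp, abs_mul, abs_of_nonneg hs]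
    exact mul_le_mul_of_nonneg_right hst (abs_nonneg u)
  calc exp (s * u) ≤ 1 + s * u + (s * u) ^ 2 / 2 * exp |s * u| :=
        exp_le_one_add_add_sq_half_mul_exp_abs _
    _ ≤ 1 + s * u + (s * u) ^ 2 / 2 * exp (t * |u|) := by gcongr
    _ = 1 + s * u + s ^ 2 / 2 * (u ^ 2 * exp (t * |u|)) := by ring

section

variable {Ω ι : Type*} [MeasurableSpace Ω] {μ : Measure Ω}

lemma integrable_of_sum_lintegral_ofReal_le {f : ι → Ω → ℝ} {s : Finset ι} {c : ℝ}
    (hf : ∀ i, AEStronglyMeasurable (f i) μ) (hf_nonneg : ∀ i, 0 ≤ᵐ[μ] f i)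
    (hsum : ∑ i ∈ s, ∫⁻ ω, ENNReal.ofReal (f i ω) ∂μ ≤ ENNReal.ofReal c) {i : ι} (hi : i ∈ s) :
    Integrable (f i) μ := by
  refine ⟨hf i, (hasFiniteIntegral_iff_ofReal (hf_nonneg i)).2 ?_⟩
  exact ((Finset.single_le_sum (fun j _ => zero_le) hi).trans hsum).trans_lt ENNReal.ofReal_lt_top

lemma sum_integral_le_of_sum_lintegral_ofReal_le {f : ι → Ω → ℝ} {s : Finset ι} {c : ℝ}
    (hc : 0 ≤ c) (hf : ∀ i, AEStronglyMeasurable (f i) μ) (hf_nonneg : ∀ i, 0 ≤ᵐ[μ] f i)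
    (hsum : ∑ i ∈ s, ∫⁻ ω, ENNReal.ofReal (f i ω) ∂μ ≤ ENNReal.ofReal c) :
    ∑ i ∈ s, ∫ ω, f i ω ∂μ ≤ c := by
  have hfin : ∀ i ∈ s, ∫⁻ ω, ENNReal.ofReal (f i ω) ∂μ ≠ ⊤ := fun i hi =>
    ((Finset.single_le_sum (fun j _ => zero_le) hi).trans hsum |>.trans_lt
      ENNReal.ofReal_lt_top).ne
  calc ∑ i ∈ s, ∫ ω, f i ω ∂μ = (∑ i ∈ s, ∫⁻ ω, ENNReal.ofReal (f i ω) ∂μ).toReal := by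
        rw [ENNReal.toReal_sum hfin]
        exact Finset.sum_congr rfl fun i _ =>
          integral_eq_lintegral_of_nonneg_ae (hf_nonneg i) (hf i)
    _ ≤ c := ENNReal.toReal_le_of_le_ofReal hc hsum

lemma integrable_exp_mul_of_integrable_sq_mul_exp_mul_abs [IsFiniteMeasure μ] {X : Ω → ℝ}
    {s t : ℝ} (hX : AEMeasurable X μ) (hint : Integrable X μ)
    (hmom : Integrable (fun ω => X ω ^ 2 * exp (t * |X ω|)) μ) (hs : 0 ≤ s) (hst : s ≤ t) :
    Integrable (fun ω => exp (s * X ω)) μ := by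
  refine (((integrable_const 1).add (hint.const_mul s)).add (hmom.const_mul (s ^ 2 / 2))).mono
    (hX.const_mul s).exp.aestronglyMeasurable (.of_forall fun ω => ?_)
  rw [norm_of_nonneg (exp_pos _).le]
  exact (exp_mul_le_one_add_add_sq_mul_exp_mul_abs hs hst (X ω)).trans (le_abs_self _)

lemma mgf_le_exp_sq_mul_integral_sq_mul_exp_mul_abs [IsProbabilityMeasure μ] {X : Ω → ℝ}
    {s t : ℝ} (hX : AEMeasurable X μ) (hint : Integrable X μ) (hmean : μ[X] = 0)
    (hmom : Integrable (fun ω => X ω ^ 2 * exp (t * |X ω|)) μ) (hs : 0 ≤ s) (hst : s ≤ t) :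
    mgf X μ s ≤ exp (s ^ 2 / 2 * ∫ ω, X ω ^ 2 * exp (t * |X ω|) ∂μ) := by
  have hlin : Integrable (fun ω => 1 + s * X ω) μ := (integrable_const 1).add (hint.const_mul s)
  calc mgf X μ s ≤ ∫ ω, (1 + s * X ω + s ^ 2 / 2 * (X ω ^ 2 * exp (t * |X ω|))) ∂μ :=
        integral_mono (integrable_exp_mul_of_integrable_sq_mul_exp_mul_abs hX hint hmom hs hst)
          (hlin.add (hmom.const_mul _))
          fun ω => exp_mul_le_one_add_add_sq_mul_exp_mul_abs hs hst (X ω)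
    _ = 1 + s ^ 2 / 2 * ∫ ω, X ω ^ 2 * exp (t * |X ω|) ∂μ := by
        rw [integral_add hlin (hmom.const_mul _), integral_add (integrable_const 1)
          (hint.const_mul s), integral_const_mul, integral_const_mul, hmean]
        simp
    _ ≤ exp (s ^ 2 / 2 * ∫ ω, X ω ^ 2 * exp (t * |X ω|) ∂μ) := by
        linarith [add_one_le_exp (s ^ 2 / 2 * ∫ ω, X ω ^ 2 * exp (t * |X ω|) ∂μ)]

lemma measure_lt_le_ofReal_exp_of_mgf_le [IsFiniteMeasure μ] {X : Ω → ℝ} {s v : ℝ} (ε : ℝ)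
    (hs : 0 ≤ s) (hint : Integrable (fun ω => exp (s * X ω)) μ)
    (hmgf : mgf X μ s ≤ exp (s ^ 2 / 2 * v)) :
    μ {ω | ε < X ω} ≤ ENNReal.ofReal (exp (-s * ε + s ^ 2 / 2 * v)) := by
  have hchernoff : μ.real {ω | ε ≤ X ω} ≤ exp (-s * ε + s ^ 2 / 2 * v) :=
    calc μ.real {ω | ε ≤ X ω} ≤ exp (-s * ε) * mgf X μ s := measure_ge_le_exp_mul_mgf ε hs hint
      _ ≤ exp (-s * ε) * exp (s ^ 2 / 2 * v) := by gcongr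
      _ = exp (-s * ε + s ^ 2 / 2 * v) := (exp_add _ _).symm
  calc μ {ω | ε < X ω} ≤ μ {ω | ε ≤ X ω} :=
        measure_mono <| Set.ofPred_subset_ofPred.2 fun _ => le_of_lt
    _ = ENNReal.ofReal (μ.real {ω | ε ≤ X ω}) := (ENNReal.ofReal_toReal (measure_ne_top _ _)).symm
    _ ≤ ENNReal.ofReal (exp (-s * ε + s ^ 2 / 2 * v)) := ENNReal.ofReal_le_ofReal hchernoff

lemma ProbabilityTheory.iIndepFun.mgf_sum_le_exp_sq_mul_sum_integral [IsProbabilityMeasure μ]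
    {ξ : ι → Ω → ℝ} (hindep : iIndepFun ξ μ)
    (hmeas : ∀ i, Measurable (ξ i)) (hint : ∀ i, Integrable (ξ i) μ) (hmean : ∀ i, μ[ξ i] = 0)
    {S : Finset ι} {s t : ℝ}
    (hmom : ∀ i ∈ S, Integrable (fun ω => ξ i ω ^ 2 * exp (t * |ξ i ω|)) μ)
    (hs : 0 ≤ s) (hst : s ≤ t) :
    mgf (∑ i ∈ S, ξ i) μ s ≤ exp (s ^ 2 / 2 * ∑ i ∈ S, ∫ ω, ξ i ω ^ 2 * exp (t * |ξ i ω|) ∂μ) := by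
  rw [hindep.mgf_sum hmeas, Finset.mul_sum, exp_sum]
  exact Finset.prod_le_prod (fun i _ => mgf_nonneg) fun i hi =>
    mgf_le_exp_sq_mul_integral_sq_mul_exp_mul_abs (hmeas i).aemeasurable (hint i) (hmean i)
      (hmom i hi) hs hst

end

/-- **Cai–Liu exponential inequality.**
Let `ξ 1, …, ξ n` be independent real random variables with mean zero. Suppose that there exist
`t > 0` and `B̄ₙ > 0` such that `∑ k, E[ξ k ^ 2 * exp (t * |ξ k|)] ≤ B̄ₙ ^ 2`. Then for every
`0 < x < B̄ₙ`, `P (∑ k, ξ k > Cₜ * B̄ₙ * x) ≤ exp (-x ^ 2)`, where `Cₜ = t + t⁻¹`. -/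
theorem cai_liu_exponential_inequality
    {Ω : Type*} [MeasurableSpace Ω] (μ : Measure Ω) [IsProbabilityMeasure μ]
    (n : ℕ) (ξ : ℕ → Ω → ℝ)
    (hmeas : ∀ k, Measurable (ξ k))
    (hindep : iIndepFun ξ μ)
    (hint : ∀ k, Integrable (ξ k) μ)
    (hmean : ∀ k, ∫ ω, ξ k ω ∂μ = 0)
    (t B : ℝ) (ht : 0 < t) (hB : 0 < B)
    (hmoment : ∑ k ∈ Finset.range n,
        ∫⁻ ω, ENNReal.ofReal ((ξ k ω) ^ 2 * Real.exp (t * |ξ k ω|)) ∂μ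
      ≤ ENNReal.ofReal (B ^ 2))
    (x : ℝ) (hx0 : 0 < x) (hxB : x < B) :
    μ {ω | (t + t⁻¹) * B * x < ∑ k ∈ Finset.range n, ξ k ω}
      ≤ ENNReal.ofReal (Real.exp (-x ^ 2)) := by
  set s := t * x / B with hs_def
  have hs : 0 ≤ s := by positivity
  have hst : s ≤ t := by rw [div_le_iff₀ hB]; nlinarith
  have hmom_meas : ∀ k, AEStronglyMeasurable (fun ω => ξ k ω ^ 2 * exp (t * |ξ k ω|)) μ :=
    fun k => by fun_prop
  have hmom_nonneg : ∀ k, 0 ≤ᵐ[μ] fun ω => ξ k ω ^ 2 * exp (t * |ξ k ω|) :=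
    fun k => .of_forall fun ω => by positivity
  have hmom : ∀ k ∈ Finset.range n, Integrable (fun ω => ξ k ω ^ 2 * exp (t * |ξ k ω|)) μ :=
    fun k => integrable_of_sum_lintegral_ofReal_le hmom_meas hmom_nonneg hmoment
  have hmgf : mgf (∑ k ∈ Finset.range n, ξ k) μ s ≤ exp (s ^ 2 / 2 * B ^ 2) :=
    (hindep.mgf_sum_le_exp_sq_mul_sum_integral hmeas hint hmean hmom hs hst).trans <| by
      gcongr
      exact sum_integral_le_of_sum_lintegral_ofReal_le (by positivity) hmom_meas hmom_nonneg
        hmoment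
  have hexp_int : Integrable (fun ω => exp (s * (∑ k ∈ Finset.range n, ξ k) ω)) μ :=
    hindep.integrable_exp_mul_sum hmeas fun k hk =>
      integrable_exp_mul_of_integrable_sq_mul_exp_mul_abs (hmeas k).aemeasurable (hint k)
        (hmom k hk) hs hst
  have hexponent : -s * ((t + t⁻¹) * B * x) + s ^ 2 / 2 * B ^ 2 ≤ -x ^ 2 := by
    rw [hs_def]; field_simp; nlinarith [sq_nonneg (t * x)]
  simpa only [Finset.sum_apply] using
    (measure_lt_le_ofReal_exp_of_mgf_le _ hs hexp_int hmgf).trans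
      (ENNReal.ofReal_le_ofReal (exp_le_exp.2 hexponent))
end

section
/- There exists a constant C depending only on C₀ and C_H such that for every h > 0 and every a ∈ ℝ, E[ ( H((ε − a)/h) − 1{ε ≥ 0} )² ] ≤ C h ( |a|/h + 1 ). -/
/-!
Off the window `|x| ≤ |a| + h` the smoothed step `H ((x - a) / h)` already equals the indicator
`1{x ≥ 0}`: to the right of the window both are `1`, to the left both are `0`. Inside it the
squared error is at most `(C_H + 1)²` and the density at most `C₀`, so the integral is bounded by
`(C_H + 1)² C₀` times the window length `2 (|a| + h) = 2 h (|a| / h + 1)`.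
-/

open MeasureTheory Set

theorem norm_integral_le_of_eq_zero_off_Icc {E : Type*} [NormedAddCommGroup E] [NormedSpace ℝ E]
    {g : ℝ → E} {m M B : ℝ} (hmM : m ≤ M) (hg : ∀ x ∈ Icc m M, ‖g x‖ ≤ B)
    (hg_zero : ∀ x ∉ Icc m M, g x = 0) :
    ‖∫ x, g x‖ ≤ B * (M - m) := by
  rw [← setIntegral_eq_integral_of_forall_compl_eq_zero hg_zero, ← Real.volume_real_Icc_of_le hmM]
  exact norm_setIntegral_le_of_norm_le_const measure_Icc_lt_top hg

section SmoothedIndicator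

variable {H : ℝ → ℝ} {a h x : ℝ}

theorem smoothed_sub_indicator_eq_zero (hH1 : ∀ u, 1 ≤ u → H u = 1)
    (hH0 : ∀ u, u ≤ -1 → H u = 0) (hh : 0 < h) (hx : x ∉ Icc (-(|a| + h)) (|a| + h)) :
    H ((x - a) / h) - (if 0 ≤ x then (1 : ℝ) else 0) = 0 := by
  rw [mem_Icc, not_and_or, not_le, not_le] at hx
  rcases hx with hx | hx
  · have hxa : (x - a) / h ≤ -1 := by
      rw [div_le_iff₀ hh]; linarith [neg_abs_le a]
    rw [hH0 _ hxa, if_neg (by linarith [abs_nonneg a])]; ring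
  · have hxa : 1 ≤ (x - a) / h := by
      rw [le_div_iff₀ hh]; linarith [le_abs_self a]
    rw [hH1 _ hxa, if_pos (by linarith [abs_nonneg a])]; ring

theorem sq_sub_indicator_le {CH : ℝ} (hHb : ∀ u, |H u| ≤ CH) (u : ℝ) :
    (H u - if 0 ≤ x then (1 : ℝ) else 0) ^ 2 ≤ (CH + 1) ^ 2 := by
  have hind : |(if 0 ≤ x then (1 : ℝ) else 0)| ≤ 1 := by split <;> simp
  rw [← sq_abs]
  gcongr
  exact (abs_sub _ _).trans (add_le_add (hHb u) hind)

end SmoothedIndicator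

/-- Let `ε` be a real random variable whose law has a density `f` bounded by `C₀`, and let
`H : ℝ → ℝ` satisfy `H u = 1` for `u ≥ 1`, `H u = 0` for `u ≤ -1`, and `|H u| ≤ C_H`.
Then there is a constant `C` depending only on `C₀` and `C_H` such that for all `h > 0`
and `a : ℝ`, `E[(H ((ε - a)/h) - 1{ε ≥ 0})²] ≤ C * h * (|a|/h + 1)`. -/
theorem smoothed_indicator_second_moment_bound
    (C₀ CH : ℝ) (hC₀ : 0 < C₀) (hCH : 0 < CH) :
    ∃ C : ℝ, 0 < C ∧
      ∀ (f : ℝ → ℝ) (H : ℝ → ℝ),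
        Measurable f → (∀ x, 0 ≤ f x) → (∀ x, f x ≤ C₀) → (∫ x, f x = 1) →
        (∀ u, 1 ≤ u → H u = 1) → (∀ u, u ≤ -1 → H u = 0) → (∀ u, |H u| ≤ CH) →
        ∀ (h : ℝ), 0 < h → ∀ (a : ℝ),
          ∫ x, (H ((x - a) / h) - (if 0 ≤ x then (1 : ℝ) else 0)) ^ 2 * f x
            ≤ C * h * (|a| / h + 1) := by
  refine ⟨2 * C₀ * (CH + 1) ^ 2, by positivity, ?_⟩
  intro f H _ hf0 hfC _ hH1 hH0 hHb h hh a
  have hwindow : -(|a| + h) ≤ |a| + h := by linarith [abs_nonneg a]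
  have hbound := norm_integral_le_of_eq_zero_off_Icc
    (g := fun x => (H ((x - a) / h) - (if 0 ≤ x then (1 : ℝ) else 0)) ^ 2 * f x)
    (B := (CH + 1) ^ 2 * C₀) hwindow
    (fun x _ => by
      rw [Real.norm_of_nonneg (mul_nonneg (sq_nonneg _) (hf0 x))]
      exact mul_le_mul (sq_sub_indicator_le hHb _) (hfC x) (hf0 x) (by positivity))
    (fun x hx => by simp only [smoothed_sub_indicator_eq_zero hH1 hH0 hh hx]; ring)
  calc _ ≤ _ := le_abs_self _
    _ ≤ (CH + 1) ^ 2 * C₀ * (|a| + h - -(|a| + h)) := hbound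
    _ = 2 * C₀ * (CH + 1) ^ 2 * h * (|a| / h + 1) := by field_simp; ring
end

section
/- There exists a constant C depending only on L and H such that for every h > 0 and every a ∈ ℝ, | E[H((ε − a)/h)] − (1 − τ) + f(0) ( a + h ∫_{−1}^{1} x H'(x) dx ) | ≤ C (h² + a²). -/
/-!
Substituting `x = a + h u` and using that `H` vanishes below `-1` and equals `1` above `1`,
`E[H((ε - a)/h)] = 1 - F(a + h) + h ∫_{-1}^{1} H(u) f(a + h u) du`, where `F` is the
distribution function of `ε`, and integrating by parts gives
`∫_{-1}^{1} x H'(x) dx = 1 - ∫_{-1}^{1} H`. The quantity to bound is then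
`h (∫ H(u) f(a + h u) du - f(0) ∫ H) - (F(a + h) - F(0) - f(0) (a + h))`, and the Lipschitz
bound `|f(y) - f(0)| ≤ L |y|` makes the first term `O(h (|a| + h))` and the second `O((a + h)²)`.
-/

open MeasureTheory intervalIntegral Set

open scoped Interval

theorem exists_forall_abs_le_of_continuous_of_const_outside {H : ℝ → ℝ} (hH : Continuous H)
    (hH1 : ∀ u, 1 ≤ u → H u = 1) (hH0 : ∀ u, u ≤ -1 → H u = 0) :
    ∃ M, ∀ u, |H u| ≤ M := by
  obtain ⟨C, hC⟩ :=
    isCompact_Icc.exists_bound_of_continuousOn (hH.continuousOn (s := Icc (-1) 1))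
  refine ⟨max C 1, fun u => ?_⟩
  rcases le_or_gt u (-1) with hu | hu
  · simp [hH0 u hu]
  rcases le_or_gt 1 u with hu' | hu'
  · simp [hH1 u hu']
  · exact (hC u ⟨hu.le, hu'.le⟩).trans (le_max_left _ _)

theorem integral_comp_sub_div_mul_eq {H f : ℝ → ℝ} (hH : Continuous H)
    (hH1 : ∀ u, 1 ≤ u → H u = 1) (hH0 : ∀ u, u ≤ -1 → H u = 0) (hf : Integrable f)
    {h : ℝ} (hh : 0 < h) (a : ℝ) :
    ∫ x, H ((x - a) / h) * f x =
      h * (∫ u in (-1 : ℝ)..1, H u * f (a + h * u)) + ∫ x in Ioi (a + h), f x := by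
  obtain ⟨M, hM⟩ := exists_forall_abs_le_of_continuous_of_const_outside hH hH1 hH0
  have hg : Integrable fun x => H ((x - a) / h) * f x :=
    hf.bdd_mul (hH.comp (by fun_prop)).aestronglyMeasurable (ae_of_all _ fun x => hM _)
  have hleft : ∫ x in Iic (a - h), H ((x - a) / h) * f x = 0 := by
    refine setIntegral_eq_zero_of_forall_eq_zero fun x (hx : x ≤ a - h) => ?_
    rw [hH0 _ ((div_le_iff₀ hh).2 (by linarith)), zero_mul]
  have hmid : ∫ x in (a - h)..(a + h), H ((x - a) / h) * f x =
      h * ∫ u in (-1 : ℝ)..1, H u * f (a + h * u) := by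
    have := integral_comp_add_mul (fun x => H ((x - a) / h) * f x) (a := -1) (b := 1) hh.ne' a
    simp only [add_sub_cancel_left, mul_div_cancel_left₀ _ hh.ne', smul_eq_mul] at this
    rw [this, mul_inv_cancel_left₀ hh.ne']
    ring_nf
  have hright : ∫ x in Ioi (a + h), H ((x - a) / h) * f x = ∫ x in Ioi (a + h), f x := by
    refine setIntegral_congr_fun measurableSet_Ioi fun x (hx : a + h < x) => ?_
    rw [hH1 _ ((le_div_iff₀ hh).2 (by linarith)), one_mul]
  rw [← integral_Iic_add_Ioi hg.integrableOn hg.integrableOn, hright, ← hmid,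
    ← integral_Iic_sub_Iic hg.integrableOn hg.integrableOn, hleft, sub_zero]

theorem integral_id_mul_deriv {H : ℝ → ℝ} (hH : Differentiable ℝ H)
    (hH' : Continuous (deriv H)) (a b : ℝ) :
    ∫ x in a..b, x * deriv H x = b * H b - a * H a - ∫ x in a..b, H x := by
  simpa using integral_mul_deriv_eq_deriv_mul_of_hasDerivAt (u' := fun _ => 1)
    continuousOn_id hH.continuous.continuousOn (fun x _ => hasDerivAt_id x)
    (fun x _ => (hH x).hasDerivAt) intervalIntegrable_const (hH'.intervalIntegrable a b)

theorem abs_integral_sub_mul_le_of_abs_sub_le {f : ℝ → ℝ} {L : ℝ}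
    (hf : ∀ x y, |f x - f y| ≤ L * |x - y|) (b : ℝ) :
    |(∫ x in (0 : ℝ)..b, f x) - f 0 * b| ≤ L * b ^ 2 := by
  have hfc : Continuous f := (LipschitzWith.of_dist_le' hf).continuous
  have hL : 0 ≤ L := by simpa using (abs_nonneg _).trans (hf 1 0)
  have hbound : ∀ x ∈ Ι (0 : ℝ) b, ‖f x - f 0‖ ≤ L * |b| := fun x hx => by
    have hx : |x| ≤ |b| := by
      rcases mem_uIoc.1 hx with ⟨h1, h2⟩ | ⟨h1, h2⟩
      · exact abs_le_abs h2 (by linarith)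
      · exact abs_le_abs_of_nonpos h2 h1.le
    calc ‖f x - f 0‖ ≤ L * |x - 0| := hf x 0
      _ ≤ L * |b| := by rw [sub_zero]; gcongr
  have := norm_integral_le_of_norm_le_const hbound
  rw [integral_sub (hfc.intervalIntegrable _ _) intervalIntegrable_const,
    intervalIntegral.integral_const, smul_eq_mul, sub_zero, mul_comm b] at this
  simpa [sq, mul_assoc] using this

theorem abs_integral_mul_comp_sub_le_of_abs_sub_le {H f : ℝ → ℝ} {M L : ℝ}
    (hH : Continuous H) (hM : ∀ u, |H u| ≤ M) (hf : ∀ x y, |f x - f y| ≤ L * |x - y|)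
    {h : ℝ} (hh : 0 < h) (a : ℝ) :
    |(∫ u in (-1 : ℝ)..1, H u * f (a + h * u)) - f 0 * ∫ u in (-1 : ℝ)..1, H u|
      ≤ 2 * M * L * (|a| + h) := by
  have hfc : Continuous f := (LipschitzWith.of_dist_le' hf).continuous
  have hM0 : 0 ≤ M := (abs_nonneg _).trans (hM 0)
  have hL : 0 ≤ L := by simpa using (abs_nonneg _).trans (hf 1 0)
  have hbound :
      ∀ u ∈ Ι (-1 : ℝ) 1, ‖H u * f (a + h * u) - f 0 * H u‖ ≤ M * (L * (|a| + h)) := by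
    intro u hu
    rw [uIoc_of_le (by norm_num)] at hu
    have hu : |u| ≤ 1 := abs_le.2 ⟨hu.1.le, hu.2⟩
    have hshift : |a + h * u| ≤ |a| + h := calc
      |a + h * u| ≤ |a| + h * |u| := by simpa [abs_mul, abs_of_pos hh] using abs_add_le a (h * u)
      _ ≤ |a| + h := by gcongr; exact mul_le_of_le_one_right hh.le hu
    calc ‖H u * f (a + h * u) - f 0 * H u‖ = |H u| * |f (a + h * u) - f 0| := by
          rw [Real.norm_eq_abs, ← abs_mul]; ring_nf
      _ ≤ M * (L * |a + h * u - 0|) := by gcongr; exacts [hM u, hf _ _]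
      _ ≤ M * (L * (|a| + h)) := by rw [sub_zero]; gcongr
  have := norm_integral_le_of_norm_le_const hbound
  have hint : Continuous fun u => H u * f (a + h * u) := by fun_prop
  rw [integral_sub (hint.intervalIntegrable _ _) ((hH.const_mul _).intervalIntegrable _ _),
    intervalIntegral.integral_const_mul] at this
  norm_num at this
  linarith

theorem smoothed_indicator_mean_expansion_general
    (L : ℝ) (hL : 0 < L) (H : ℝ → ℝ)
    (hH1 : ∀ u, 1 ≤ u → H u = 1) (hH0 : ∀ u, u ≤ -1 → H u = 0)
    (hHdiff : Differentiable ℝ H) (hHdiff2 : Differentiable ℝ (deriv H)) :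
    ∃ C : ℝ, 0 < C ∧
      ∀ (f : ℝ → ℝ) (τ : ℝ),
        0 < τ → τ < 1 →
        Measurable f → (∀ x, 0 ≤ f x) → (∫ x, f x = 1) →
        (∀ x y : ℝ, |f x - f y| ≤ L * |x - y|) →
        (∫ x in Set.Iic (0 : ℝ), f x) = τ →
        ∀ (h : ℝ), 0 < h → ∀ (a : ℝ),
          |(∫ x, H ((x - a) / h) * f x) - (1 - τ)
              + f 0 * (a + h * ∫ x in (-1 : ℝ)..1, x * deriv H x)|
            ≤ C * (h ^ 2 + a ^ 2) := by
  have hHc := hHdiff.continuous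
  obtain ⟨M, hM⟩ := exists_forall_abs_le_of_continuous_of_const_outside hHc hH1 hH0
  have hM0 : 0 ≤ M := (abs_nonneg _).trans (hM 0)
  refine ⟨L * (3 * M + 2), by positivity, fun f τ _ _ _ _ hf1 hfL hfτ h hh a => ?_⟩
  have hfi : Integrable f := .of_integral_ne_zero (by simp [hf1])
  have htail : ∫ x in Ioi (a + h), f x = 1 - τ - ∫ x in (0 : ℝ)..(a + h), f x := by
    rw [← integral_Iic_sub_Iic hfi.integrableOn hfi.integrableOn, hfτ, ← hf1,
      ← integral_Iic_add_Ioi (b := a + h) hfi.integrableOn hfi.integrableOn]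
    ring
  rw [integral_comp_sub_div_mul_eq hHc hH1 hH0 hfi hh, htail,
    integral_id_mul_deriv hHdiff hHdiff2.continuous, hH1 1 le_rfl, hH0 (-1) le_rfl]
  have hmid := abs_integral_mul_comp_sub_le_of_abs_sub_le hHc hM hfL hh a
  have hcdf := abs_integral_sub_mul_le_of_abs_sub_le hfL (a + h)
  calc _ = |h * ((∫ u in (-1 : ℝ)..1, H u * f (a + h * u)) - f 0 * ∫ u in (-1 : ℝ)..1, H u)
          - ((∫ x in (0 : ℝ)..(a + h), f x) - f 0 * (a + h))| := by
        congr 1; ring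
    _ ≤ h * (2 * M * L * (|a| + h)) + L * (a + h) ^ 2 := by
      refine (abs_sub _ _).trans (add_le_add ?_ hcdf)
      rw [abs_mul, abs_of_pos hh]
      exact mul_le_mul_of_nonneg_left hmid hh.le
    _ ≤ L * (3 * M + 2) * (h ^ 2 + a ^ 2) := by
      nlinarith [sq_abs a, sq_nonneg (h - |a|), sq_nonneg (a - h), mul_nonneg hM0 hL.le]

/-- Let `ε` be a real random variable whose law has a Lipschitz density `f` (constant `L`)
with `P(ε ≤ 0) = τ`, and let `H : ℝ → ℝ` be twice differentiable with `H u = 1` for `u ≥ 1`,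
`H u = 0` for `u ≤ -1`, and bounded second derivative. Then there is a constant `C` depending
only on `L` and `H` such that for every `h > 0` and `a : ℝ`,
`|E[H ((ε - a)/h)] - (1 - τ) + f 0 * (a + h * ∫_{-1}^{1} x H'(x) dx)| ≤ C * (h² + a²)`. -/
theorem smoothed_indicator_mean_expansion
    (L : ℝ) (hL : 0 < L) (H : ℝ → ℝ)
    (hH1 : ∀ u, 1 ≤ u → H u = 1) (hH0 : ∀ u, u ≤ -1 → H u = 0)
    (hHdiff : Differentiable ℝ H) (hHdiff2 : Differentiable ℝ (deriv H))
    (hHbdd : ∃ C₂ : ℝ, ∀ u, |deriv (deriv H) u| ≤ C₂) :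
    ∃ C : ℝ, 0 < C ∧
      ∀ (f : ℝ → ℝ) (τ : ℝ),
        0 < τ → τ < 1 →
        Measurable f → (∀ x, 0 ≤ f x) → (∫ x, f x = 1) →
        (∀ x y : ℝ, |f x - f y| ≤ L * |x - y|) →
        (∫ x in Set.Iic (0 : ℝ), f x) = τ →
        ∀ (h : ℝ), 0 < h → ∀ (a : ℝ),
          |(∫ x, H ((x - a) / h) * f x) - (1 - τ)
              + f 0 * (a + h * ∫ x in (-1 : ℝ)..1, x * deriv H x)|
            ≤ C * (h ^ 2 + a ^ 2) :=
  smoothed_indicator_mean_expansion_general L hL H hH1 hH0 hHdiff hHdiff2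
end

section
/- There exists a constant C depending only on L and H such that for every h > 0 and every a ∈ ℝ, | E[(ε/h) H'((ε − a)/h)] − f(0) ( a + h ∫_{−1}^{1} x H'(x) dx ) | ≤ C (h² + a²). -/
open MeasureTheory intervalIntegral

/-!
Substituting `x = h u + a` turns the expectation into `∫_{-1}^{1} (h u + a) H'(u) f(h u + a) du`,
because `H'` vanishes off `(-1, 1)`. Replacing `f(h u + a)` by `f 0` produces exactly
`f 0 * (a + h ∫ u H'(u) du)`, since `∫ H' = H 1 - H (-1) = 1`, and costs at most
`∫ |h u + a| |H'(u)| L |h u + a| du ≤ 4 L sup|H'| (h² + a²)`.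
-/

theorem deriv_eq_zero_of_forall_mem_eq {f : ℝ → ℝ} {s : Set ℝ} {x c : ℝ}
    (hs : UniqueDiffWithinAt ℝ s x) (hx : x ∈ s) (hf : ∀ y ∈ s, f y = c) : deriv f x = 0 := by
  by_cases hd : DifferentiableAt ℝ f x
  · exact hs.eq_deriv _ hd.hasDerivAt.hasDerivWithinAt
      ((hasDerivWithinAt_const x s c).congr hf (hf x hx))
  · exact deriv_zero_of_not_differentiableAt hd

theorem support_deriv_subset_Ioo {H : ℝ → ℝ} (hH1 : ∀ u, 1 ≤ u → H u = 1)
    (hH0 : ∀ u, u ≤ -1 → H u = 0) : Function.support (deriv H) ⊆ Set.Ioo (-1) 1 := by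
  intro u hu
  by_contra hout
  rcases le_or_gt u (-1) with hle | hgt
  · exact hu (deriv_eq_zero_of_forall_mem_eq ((uniqueDiffOn_Iic _) u hle) hle hH0)
  · have hge : 1 ≤ u := not_lt.mp fun hlt => hout ⟨hgt, hlt⟩
    exact hu (deriv_eq_zero_of_forall_mem_eq ((uniqueDiffOn_Ici _) u hge) hge hH1)

theorem integral_mul_comp_div_sub (k : ℝ → ℝ) {φ : ℝ → ℝ}
    (hφ : Function.support φ ⊆ Set.Ioo (-1) 1) {h : ℝ} (hh : 0 < h) (a : ℝ) :
    ∫ x, k x * φ ((x - a) / h) = ∫ u in (-1)..1, h * k (h * u + a) * φ u := by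
  have hscale : ∫ u, k (h * u + a) * φ u = h⁻¹ * ∫ x, k x * φ ((x - a) / h) := by
    have := Measure.integral_comp_mul_left (fun y => k (y + a) * φ (y / h)) h
    simp only [mul_div_cancel_left₀ _ hh.ne', abs_inv, abs_of_pos hh, smul_eq_mul] at this
    rw [this, ← integral_add_right_eq_self (fun x => k x * φ ((x - a) / h)) a]
    simp
  have hsupp : Function.support (fun u => h * k (h * u + a) * φ u) ⊆ Set.Ioc (-1) 1 :=
    (Function.support_mul_subset_right _ _).trans (hφ.trans Set.Ioo_subset_Ioc_self)
  rw [integral_eq_integral_of_support_subset hsupp]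
  simp_rw [mul_assoc, MeasureTheory.integral_const_mul, hscale, mul_inv_cancel_left₀ hh.ne']

theorem integral_affine_mul_mul_const {φ : ℝ → ℝ} (hφ : Continuous φ)
    (hφ1 : ∫ u in (-1)..1, φ u = 1) (h a c : ℝ) :
    ∫ u in (-1)..1, (h * u + a) * φ u * c = c * (a + h * ∫ u in (-1)..1, u * φ u) := by
  have hsplit : (fun u => (h * u + a) * φ u * c) = fun u => c * h * (u * φ u) + c * a * φ u := by
    ext u; ring
  rw [hsplit, intervalIntegral.integral_add
    ((by fun_prop : Continuous _).intervalIntegrable _ _)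
    ((by fun_prop : Continuous _).intervalIntegrable _ _),
    intervalIntegral.integral_const_mul, intervalIntegral.integral_const_mul,
    hφ1]
  ring

theorem abs_affine_mul_mul_sub_le {φ f : ℝ → ℝ} {L M h a u : ℝ} (hL : 0 ≤ L)
    (hM : |φ u| ≤ M) (hf : ∀ x y, |f x - f y| ≤ L * |x - y|) (hu : |u| ≤ 1) :
    |(h * u + a) * φ u * (f (h * u + a) - f 0)| ≤ 2 * L * M * (h ^ 2 + a ^ 2) := by
  have hM0 : 0 ≤ M := (abs_nonneg _).trans hM
  have hsq : (h * u + a) ^ 2 ≤ 2 * (h ^ 2 + a ^ 2) := by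
    have : u ^ 2 ≤ 1 := by nlinarith [abs_nonneg u, sq_abs u]
    nlinarith [sq_nonneg (h * u - a), sq_nonneg h]
  calc |(h * u + a) * φ u * (f (h * u + a) - f 0)|
      = |h * u + a| * |φ u| * |f (h * u + a) - f 0| := by rw [abs_mul, abs_mul]
    _ ≤ |h * u + a| * M * (L * |h * u + a|) := by
        gcongr
        simpa using hf (h * u + a) 0
    _ = L * M * (h * u + a) ^ 2 := by rw [← sq_abs (h * u + a)]; ring
    _ ≤ L * M * (2 * (h ^ 2 + a ^ 2)) := by gcongr
    _ = 2 * L * M * (h ^ 2 + a ^ 2) := by ring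

theorem abs_integral_affine_mul_sub_le {φ f : ℝ → ℝ} {L M : ℝ} (hφ : Continuous φ)
    (hM : ∀ u, |φ u| ≤ M) (hφ1 : ∫ u in (-1)..1, φ u = 1) (hL : 0 ≤ L)
    (hf : ∀ x y, |f x - f y| ≤ L * |x - y|) (h a : ℝ) :
    |(∫ u in (-1)..1, (h * u + a) * φ u * f (h * u + a))
        - f 0 * (a + h * ∫ u in (-1)..1, u * φ u)| ≤ 4 * L * M * (h ^ 2 + a ^ 2) := by
  have hfc : Continuous f :=
    (LipschitzWith.of_dist_le' (K := L) fun x y => by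
      simpa only [Real.dist_eq] using hf x y).continuous
  rw [← integral_affine_mul_mul_const hφ hφ1, ← intervalIntegral.integral_sub
    ((by fun_prop : Continuous _).intervalIntegrable _ _)
    ((by fun_prop : Continuous _).intervalIntegrable _ _)]
  calc |∫ u in (-1)..1, (h * u + a) * φ u * f (h * u + a) - (h * u + a) * φ u * f 0|
      = ‖∫ u in (-1)..1, (h * u + a) * φ u * (f (h * u + a) - f 0)‖ := by
        simp_rw [mul_sub, Real.norm_eq_abs]
    _ ≤ 2 * L * M * (h ^ 2 + a ^ 2) * |1 - (-1)| := by
        refine norm_integral_le_of_norm_le_const fun u hu => ?_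
        rw [Set.uIoc_of_le (by norm_num)] at hu
        exact abs_affine_mul_mul_sub_le hL (hM u) hf (abs_le.mpr ⟨hu.1.le, hu.2⟩)
    _ = 4 * L * M * (h ^ 2 + a ^ 2) := by norm_num; ring

theorem smoothed_kernel_mean_expansion_general
    (L : ℝ) (hL : 0 < L) (H : ℝ → ℝ)
    (hH1 : ∀ u, 1 ≤ u → H u = 1) (hH0 : ∀ u, u ≤ -1 → H u = 0)
    (hHdiff : Differentiable ℝ H) (hHdiff2 : Differentiable ℝ (deriv H)) :
    ∃ C : ℝ, 0 < C ∧
      ∀ (f : ℝ → ℝ) (τ : ℝ),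
        0 < τ → τ < 1 →
        Measurable f → (∀ x, 0 ≤ f x) → (∫ x, f x = 1) →
        (∀ x y : ℝ, |f x - f y| ≤ L * |x - y|) →
        (∫ x in Set.Iic (0 : ℝ), f x) = τ →
        ∀ (h : ℝ), 0 < h → ∀ (a : ℝ),
          |(∫ x, (x / h) * deriv H ((x - a) / h) * f x)
              - f 0 * (a + h * ∫ x in (-1 : ℝ)..1, x * deriv H x)|
            ≤ C * (h ^ 2 + a ^ 2) := by
  have hsupp := support_deriv_subset_Ioo hH1 hH0
  have hcont : Continuous (deriv H) := hHdiff2.continuous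
  obtain ⟨M, hM⟩ := hcont.bounded_above_of_compact_support <|
    HasCompactSupport.intro isCompact_Icc fun x hx =>
      Function.notMem_support.mp fun hs => hx (Set.Ioo_subset_Icc_self (hsupp hs))
  have hM0 : 0 ≤ M := (norm_nonneg _).trans (hM 0)
  have hint : ∫ u in (-1)..1, deriv H u = 1 := by
    rw [integral_deriv_eq_sub (fun x _ => hHdiff x) (hcont.intervalIntegrable _ _),
      hH1 1 le_rfl, hH0 (-1) le_rfl, sub_zero]
  refine ⟨4 * L * M + 1, by positivity, fun f _ _ _ _ _ _ hf _ h hh a => ?_⟩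
  have hsubst : ∫ x, (x / h) * deriv H ((x - a) / h) * f x
      = ∫ u in (-1)..1, (h * u + a) * deriv H u * f (h * u + a) := by
    simp_rw [mul_right_comm _ (deriv H _), integral_mul_comp_div_sub _ hsupp hh a]
    refine intervalIntegral.integral_congr fun u _ => ?_
    field_simp
  rw [hsubst]
  refine (abs_integral_affine_mul_sub_le hcont hM hint hL.le hf h a).trans ?_
  nlinarith [sq_nonneg h, sq_nonneg a]

/-- Let `ε` be a real random variable whose law has a Lipschitz density `f` (constant `L`)
with `P(ε ≤ 0) = τ`, and let `H : ℝ → ℝ` be twice differentiable with `H u = 1` for `u ≥ 1`,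
`H u = 0` for `u ≤ -1`, and bounded second derivative. Then there is a constant `C` depending
only on `L` and `H` such that for every `h > 0` and `a : ℝ`,
`|E[(ε/h) H'((ε - a)/h)] - f 0 * (a + h * ∫_{-1}^{1} x H'(x) dx)| ≤ C * (h² + a²)`. -/
theorem smoothed_kernel_mean_expansion
    (L : ℝ) (hL : 0 < L) (H : ℝ → ℝ)
    (hH1 : ∀ u, 1 ≤ u → H u = 1) (hH0 : ∀ u, u ≤ -1 → H u = 0)
    (hHdiff : Differentiable ℝ H) (hHdiff2 : Differentiable ℝ (deriv H))
    (hHbdd : ∃ C₂ : ℝ, ∀ u, |deriv (deriv H) u| ≤ C₂) :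
    ∃ C : ℝ, 0 < C ∧
      ∀ (f : ℝ → ℝ) (τ : ℝ),
        0 < τ → τ < 1 →
        Measurable f → (∀ x, 0 ≤ f x) → (∫ x, f x = 1) →
        (∀ x y : ℝ, |f x - f y| ≤ L * |x - y|) →
        (∫ x in Set.Iic (0 : ℝ), f x) = τ →
        ∀ (h : ℝ), 0 < h → ∀ (a : ℝ),
          |(∫ x, (x / h) * deriv H ((x - a) / h) * f x)
              - f 0 * (a + h * ∫ x in (-1 : ℝ)..1, x * deriv H x)|
            ≤ C * (h ^ 2 + a ^ 2) :=
  smoothed_kernel_mean_expansion_general L hL H hH1 hH0 hHdiff hHdiff2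
end
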